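/- arXiv:1203.2018 — 7 statements merged into one kernel-verified Lean document; each statement's English description precedes it below -/
import Mathlib

section
/- Let n ≥ 1 and N = n(n+1)/2. The Lusztig parametrization map from (ℝ_{>0})^N to the upper unitriangular (n+1)×(n+1) real matrices, sending a tuple of positive parameters to the product of the matrices x_{i_1}(a_1)·x_{i_2}(a_2)⋯x_{i_N}(a_N) along the standard reduced word w₀ = (s_n s_{n−1}⋯s_1)(s_n s_{n−1}⋯s_2)⋯(s_n s_{n−1} s_{n-2})(s_n s_{n−1})(s_n) of the longest Weyl group element of type A_n, is injective: if two tuples of positive reals give the same matrix product, then the tuples are equal. -/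
open Matrix

open Fin.NatCast in
/-- `x_i(a) = 1 + a·E_{i,i+1}` in the (n+1)×(n+1) real matrices, with 0-based letter
index `i : ℕ` (so the letter `s_{i+1}` of the paper corresponds to `i`); natural
numbers are cast to `Fin (n+1)`. -/
noncomputable def xA (n : ℕ) (i : ℕ) (a : ℝ) : Matrix (Fin (n + 1)) (Fin (n + 1)) ℝ :=
  1 + Matrix.single (i : Fin (n + 1)) ((i + 1 : ℕ) : Fin (n + 1)) a

/-- The standard reduced word `w₀ = (s_n⋯s_1)(s_n⋯s_2)⋯(s_n s_{n-1})(s_n)` of the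
longest element of the Weyl group of type `Aₙ`, written with 0-based letters
(`s_{i+1} ↦ i`), read left to right. -/
def stdWord (n : ℕ) : List ℕ :=
  (List.range n).flatMap fun j => (List.range (n - j)).map fun t => n - 1 - t

/-- The product `x_{i₁}(a₁)·x_{i₂}(a₂)⋯x_{i_N}(a_N)` along a word zipped with its
parameters. -/
noncomputable def luszProd (n : ℕ) (l : List (ℕ × ℝ)) :
    Matrix (Fin (n + 1)) (Fin (n + 1)) ℝ :=
  (l.map fun p => xA n p.1 p.2).prod

/-!
Left multiplication by `x_i(a)` adds `a` times row `i + 1` to row `i`. Split the word as a block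
with letters `n - 1, …, j` followed by a word in the letters `> j`, so that the product is `B * C`
with `C` unitriangular and equal to the identity on rows `≤ j`. For `j ≤ p < n`, row `p` of
`B * C` is `C p + a_p • C (p + 1)`. Going up from row `j`, where `C` is known, each row of the
product determines `a_p` (read off in column `p + 1`, where `C (p + 1)` has its diagonal `1`) and
then, as `a_p ≠ 0`, the row `C (p + 1)`. So the block parameters and `C` are determined, and
induction on the number of blocks concludes.
-/

open Fin.NatCast

section

variable {n : ℕ}

theorem natCast_fin_eq_iff {a b : ℕ} (ha : a ≤ n) (hb : b ≤ n) :
    (a : Fin (n + 1)) = b ↔ a = b := by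
  refine ⟨fun h => ?_, congrArg _⟩
  simpa [Fin.val_cast_of_lt (Nat.lt_succ_of_le ha), Fin.val_cast_of_lt (Nat.lt_succ_of_le hb)]
    using congrArg Fin.val h

theorem xA_eq_transvection (i : ℕ) (a : ℝ) :
    xA n i a = transvection (i : Fin (n + 1)) ((i + 1 : ℕ) : Fin (n + 1)) a := rfl

theorem luszProd_cons (x : ℕ × ℝ) (l : List (ℕ × ℝ)) :
    luszProd n (x :: l) = xA n x.1 x.2 * luszProd n l := by
  simp [luszProd]

theorem luszProd_append (l₁ l₂ : List (ℕ × ℝ)) :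
    luszProd n (l₁ ++ l₂) = luszProd n l₁ * luszProd n l₂ := by
  simp [luszProd]

theorem xA_mul_row_self (i : ℕ) (a : ℝ) (D : Matrix (Fin (n + 1)) (Fin (n + 1)) ℝ) :
    (xA n i a * D) i = D i + a • D ((i + 1 : ℕ) : Fin (n + 1)) := by
  ext q
  simp [xA_eq_transvection, transvection_mul_apply_same]

theorem xA_mul_row_of_ne {i p : ℕ} (hi : i ≤ n) (hp : p ≤ n) (hip : i ≠ p) (a : ℝ)
    (D : Matrix (Fin (n + 1)) (Fin (n + 1)) ℝ) : (xA n i a * D) p = D p := by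
  ext q
  exact transvection_mul_apply_of_ne _ _ _ _ (mt (natCast_fin_eq_iff hp hi).1 hip.symm) _ _

theorem luszProd_mul_row_of_forall_ne {l : List (ℕ × ℝ)} {p : ℕ} (hp : p ≤ n)
    (hl : ∀ x ∈ l, x.1 ≤ n ∧ x.1 ≠ p) (D : Matrix (Fin (n + 1)) (Fin (n + 1)) ℝ) :
    (luszProd n l * D) p = D p := by
  induction l with
  | nil => simp [luszProd]
  | cons x l ih =>
    obtain ⟨hxn, hxp⟩ := hl x List.mem_cons_self
    rw [luszProd_cons, mul_assoc, xA_mul_row_of_ne hxn hp hxp, ih fun y hy => hl y (.tail _ hy)]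

theorem luszProd_apply_of_le {l : List (ℕ × ℝ)} (hl : ∀ x ∈ l, x.1 < n) {p q : Fin (n + 1)}
    (hqp : q ≤ p) : luszProd n l p q = (1 : Matrix (Fin (n + 1)) (Fin (n + 1)) ℝ) p q := by
  induction l generalizing p with
  | nil => rfl
  | cons x l ih =>
    have hl' : ∀ y ∈ l, y.1 < n := fun y hy => hl y (.tail _ hy)
    rw [luszProd_cons, xA_eq_transvection]
    by_cases hp : p = (x.1 : Fin (n + 1))
    · subst hp
      have hlt : q < ((x.1 + 1 : ℕ) : Fin (n + 1)) := by
        have := hl x List.mem_cons_self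
        rw [Fin.lt_def, Fin.val_cast_of_lt (by omega)]
        rw [Fin.le_def, Fin.val_cast_of_lt (by omega)] at hqp
        omega
      rw [transvection_mul_apply_same, ih hl' hqp, ih hl' hlt.le, one_apply_ne hlt.ne', mul_zero,
        add_zero]
    · rw [transvection_mul_apply_of_ne _ _ _ _ hp, ih hl' hqp]

end

theorem eq_of_smul_eq_smul_of_apply_eq_one {ι R : Type*} [MonoidWithZero R]
    [IsLeftCancelMulZero R] {a a' : R} {v v' : ι → R} {i : ι} (ha : a ≠ 0) (hv : v i = 1)
    (hv' : v' i = 1) (h : a • v = a' • v') :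
    a = a' ∧ v = v' := by
  have haa' : a = a' := by simpa [hv, hv'] using congrFun h i
  subst haa'
  exact ⟨rfl, funext fun j => mul_left_cancel₀ ha (congrFun h j)⟩

def decBlock (t m : ℕ) : List ℕ := (List.range m).map fun k => t - 1 - k

theorem decBlock_succ (t m : ℕ) : decBlock t (m + 1) = (t - 1) :: decBlock (t - 1) m := by
  simp only [decBlock, List.range_succ_eq_map, List.map_cons, List.map_map, Function.comp_def]
  congr 1
  exact List.map_congr_left fun k _ => by omega

theorem mem_decBlock {t m i : ℕ} (hi : i ∈ decBlock t m) (hm : m ≤ t) :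
    t - m ≤ i ∧ i < t := by
  simp only [decBlock, List.mem_map, List.mem_range] at hi
  obtain ⟨k, hk, rfl⟩ := hi
  omega

theorem luszProd_decBlock_mul_cancel {n m t : ℕ} (hmt : m ≤ t) (htn : t ≤ n)
    {l l' : List (ℕ × ℝ)} (hl : l.map Prod.fst = decBlock t m)
    (hl' : l'.map Prod.fst = decBlock t m) (hne : ∀ x ∈ l, x.2 ≠ 0)
    {C C' : Matrix (Fin (n + 1)) (Fin (n + 1)) ℝ}
    (hC : ∀ p, C p p = 1) (hC' : ∀ p, C' p p = 1)
    (hlow : ∀ p : ℕ, p + m ≤ t → C p = C' p)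
    (h : ∀ p : ℕ, p < t → (luszProd n l * C) p = (luszProd n l' * C') p) :
    l = l' ∧ ∀ p : ℕ, p ≤ t → C p = C' p := by
  induction m generalizing t l l' with
  | zero =>
    simp only [decBlock, List.range_zero, List.map_nil, List.map_eq_nil_iff] at hl hl'
    exact ⟨hl.trans hl'.symm, fun p hp => hlow p (by omega)⟩
  | succ m ih =>
    obtain ⟨s, rfl⟩ : ∃ s, t = s + 1 := ⟨t - 1, by omega⟩
    rw [decBlock_succ, Nat.add_sub_cancel, List.map_eq_cons_iff] at hl hl'
    obtain ⟨⟨i, f⟩, r, rfl, hi, hr⟩ := hl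
    obtain ⟨⟨i', f'⟩, r', rfl, hi', hr'⟩ := hl'
    dsimp only at hi hi'
    subst i i'
    have hrow : ∀ p : ℕ, s ≤ p → p ≤ n → ∀ D : Matrix (Fin (n + 1)) (Fin (n + 1)) ℝ,
        (luszProd n r * D) p = D p := fun p hsp hpn D =>
      luszProd_mul_row_of_forall_ne hpn (fun x hx => by
        have := mem_decBlock (hr ▸ List.mem_map_of_mem hx) (by omega)
        omega) D
    obtain ⟨rfl, hCs⟩ := ih (by omega) (by omega) hr hr' (fun x hx => hne x (.tail _ hx))
      (fun p hp => hlow p (by omega)) fun p hp => by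
        simpa only [luszProd_cons, mul_assoc, xA_mul_row_of_ne (by omega : s ≤ n)
          (by omega : p ≤ n) (by omega : s ≠ p)] using h p (by omega)
    have hs := h s (by omega)
    simp only [luszProd_cons, mul_assoc, xA_mul_row_self, hrow s le_rfl (by omega),
      hrow (s + 1) (by omega) htn, hCs s le_rfl, add_right_inj] at hs
    obtain ⟨rfl, hs1⟩ :=
      eq_of_smul_eq_smul_of_apply_eq_one (hne _ List.mem_cons_self) (hC _) (hC' _) hs
    refine ⟨rfl, fun p hp => ?_⟩
    rcases Nat.lt_or_eq_of_le hp with hp | rfl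
    · exact hCs p (by omega)
    · exact hs1

def stdWordTail (n : ℕ) : ℕ → List ℕ
  | 0 => []
  | k + 1 => decBlock n (k + 1) ++ stdWordTail n k

theorem stdWord_eq_stdWordTail (n : ℕ) : stdWord n = stdWordTail n n := by
  suffices h : ∀ k, (List.range k).flatMap (fun j => decBlock n (k - j)) = stdWordTail n k from
    h n
  intro k
  induction k with
  | zero => rfl
  | succ k ih =>
    rw [List.range_succ_eq_map, List.flatMap_cons, List.flatMap_map, stdWordTail, ← ih]
    simp only [Nat.succ_sub_succ, Nat.sub_zero]

theorem length_stdWordTail (n k : ℕ) : (stdWordTail n k).length = k * (k + 1) / 2 := by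
  induction k with
  | zero => rfl
  | succ k ih =>
    rw [stdWordTail, List.length_append, ih, decBlock, List.length_map, List.length_range]
    have : (k + 1) * (k + 1 + 1) = k * (k + 1) + 2 * (k + 1) := by ring
    omega

theorem mem_stdWordTail {n k i : ℕ} (hk : k ≤ n) (hi : i ∈ stdWordTail n k) :
    n - k ≤ i ∧ i < n := by
  induction k with
  | zero => simp [stdWordTail] at hi
  | succ k ih =>
    rcases List.mem_append.1 hi with hi | hi
    · exact mem_decBlock hi hk
    · have := ih (by omega) hi
      omega

theorem luszProd_inj_of_map_fst_eq_stdWordTail {n k : ℕ} (hk : k ≤ n) {l l' : List (ℕ × ℝ)}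
    (hl : l.map Prod.fst = stdWordTail n k) (hl' : l'.map Prod.fst = stdWordTail n k)
    (hne : ∀ x ∈ l, x.2 ≠ 0) (h : luszProd n l = luszProd n l') : l = l' := by
  induction k generalizing l l' with
  | zero =>
    rw [stdWordTail, List.map_eq_nil_iff] at hl hl'
    rw [hl, hl']
  | succ k ih =>
    rw [stdWordTail, List.map_eq_append_iff] at hl hl'
    obtain ⟨l₁, l₂, rfl, hl₁, hl₂⟩ := hl
    obtain ⟨l₁', l₂', rfl, hl₁', hl₂'⟩ := hl'
    have hletters : ∀ {r : List (ℕ × ℝ)}, r.map Prod.fst = stdWordTail n k →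
        ∀ x ∈ r, n - k ≤ x.1 ∧ x.1 < n := fun hr x hx =>
      mem_stdWordTail (by omega) (hr ▸ List.mem_map_of_mem hx)
    have hdiag : ∀ {r : List (ℕ × ℝ)}, r.map Prod.fst = stdWordTail n k →
        ∀ p, luszProd n r p p = 1 := fun hr p => by
      rw [luszProd_apply_of_le (fun x hx => (hletters hr x hx).2) le_rfl, one_apply_eq]
    have hlow : ∀ {r : List (ℕ × ℝ)}, r.map Prod.fst = stdWordTail n k →
        ∀ p : ℕ, p + (k + 1) ≤ n → luszProd n r p = (1 : Matrix (Fin (n + 1)) _ ℝ) p :=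
      fun hr p hp => by
        simpa using luszProd_mul_row_of_forall_ne (by omega) (fun x hx => by
          have := hletters hr x hx
          omega) (1 : Matrix (Fin (n + 1)) _ ℝ)
    obtain ⟨rfl, hrows⟩ := luszProd_decBlock_mul_cancel hk le_rfl hl₁ hl₁'
      (fun x hx => hne x (List.mem_append_left _ hx)) (hdiag hl₂) (hdiag hl₂')
      (fun p hp => (hlow hl₂ p hp).trans (hlow hl₂' p hp).symm)
      fun p _ => by rw [← luszProd_append, ← luszProd_append, h]
    have hC : luszProd n l₂ = luszProd n l₂' := by
      ext p q
      simpa using congrFun (hrows p (by omega)) q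
    rw [ih (by omega) hl₂ hl₂' (fun x hx => hne x (List.mem_append_right _ hx)) hC]

theorem lusztig_parametrization_injective_general (n : ℕ) :
    (stdWord n).length = n * (n + 1) / 2 ∧
    ∀ a b : List ℝ, a.length = (stdWord n).length → b.length = (stdWord n).length →
      (∀ t ∈ a, 0 < t) → (∀ t ∈ b, 0 < t) →
      luszProd n ((stdWord n).zip a) = luszProd n ((stdWord n).zip b) → a = b := by
  rw [stdWord_eq_stdWordTail]
  refine ⟨length_stdWordTail n n, fun a b ha hb hapos _ h => ?_⟩
  have hzip := luszProd_inj_of_map_fst_eq_stdWordTail le_rfl (List.map_fst_zip ha.ge)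
    (List.map_fst_zip hb.ge) (fun x hx => (hapos _ (List.of_mem_zip hx).2).ne') h
  rw [← List.map_snd_zip ha.le, ← List.map_snd_zip hb.le, hzip]

/-- Lemma 2.1 of the paper in type `Aₙ` for the standard reduced word: the Lusztig
parametrization `(ℝ_{>0})^N → U⁺`, `N = n(n+1)/2`, is injective. -/
theorem lusztig_parametrization_injective (n : ℕ) (hn : 1 ≤ n) :
    (stdWord n).length = n * (n + 1) / 2 ∧
    ∀ a b : List ℝ, a.length = (stdWord n).length → b.length = (stdWord n).length →
      (∀ t ∈ a, 0 < t) → (∀ t ∈ b, 0 < t) →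
      luszProd n ((stdWord n).zip a) = luszProd n ((stdWord n).zip b) → a = b :=
  lusztig_parametrization_injective_general n
end

section
/- Let R be an associative unital ring, q a central invertible element, and a, b, c invertible elements of R with a + c invertible, satisfying the q-commutation relations ab = q²ba, ca = q²ac, and bc = cb. Define a' := bc(a+c)⁻¹, b' := a+c, c' := ba(a+c)⁻¹. Then: (i) the alternative forms agree, i.e. (a+c)⁻¹cb = bc(a+c)⁻¹ and (a+c)⁻¹ab = ba(a+c)⁻¹; and (ii) the primed variables satisfy the transported q-commutation relations b'c' = q²c'b', c'a' = q²a'c', and a'b' = b'a'. -/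
/-- The quantum Lusztig rank-two transformation (Section 5 of the paper):
with `ab = q²ba`, `ca = q²ac`, `bc = cb` and `a' = bc(a+c)⁻¹`, `b' = a+c`,
`c' = ba(a+c)⁻¹`, (i) the alternative forms agree, `(a+c)⁻¹cb = bc(a+c)⁻¹` and
`(a+c)⁻¹ab = ba(a+c)⁻¹`, and (ii) the primed variables satisfy `b'c' = q²c'b'`,
`c'a' = q²a'c'`, `a'b' = b'a'`. -/
theorem quantum_lusztig_transformation_relations (R : Type*) [Ring R] (q a b c : R)
    (hqc : ∀ x : R, q * x = x * q) (hq : IsUnit q)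
    (ha : IsUnit a) (hb : IsUnit b) (hc : IsUnit c) (hac : IsUnit (a + c))
    (hab : a * b = q ^ 2 * (b * a)) (hca : c * a = q ^ 2 * (a * c))
    (hbc : b * c = c * b) :
    (Ring.inverse (a + c) * c * b = b * c * Ring.inverse (a + c) ∧
      Ring.inverse (a + c) * a * b = b * a * Ring.inverse (a + c)) ∧
    (let a' := b * c * Ring.inverse (a + c)
     let b' := a + c
     let c' := b * a * Ring.inverse (a + c)
     b' * c' = q ^ 2 * (c' * b') ∧ c' * a' = q ^ 2 * (a' * c') ∧
       a' * b' = b' * a') := by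
  have he1 : (a + c) * Ring.inverse (a + c) = 1 := Ring.mul_inverse_cancel _ hac
  have he2 : Ring.inverse (a + c) * (a + c) = 1 := Ring.inverse_mul_cancel _ hac
  set e := Ring.inverse (a + c) with hedef
  have hq2 : ∀ x : R, q ^ 2 * x = x * q ^ 2 := fun x => by
    rw [pow_two, mul_assoc, hqc, ← mul_assoc, hqc, mul_assoc]
  have hmove : ∀ x y : R, x * (q ^ 2 * y) = q ^ 2 * (x * y) := fun x y => by
    rw [← mul_assoc, ← hq2, mul_assoc]
  have conj : ∀ x y : R, x * (a + c) = (a + c) * y → e * x = y * e := fun x y h => by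
    calc e * x = e * (x * ((a + c) * e)) := by rw [he1, mul_one]
      _ = e * (x * (a + c)) * e := by simp only [mul_assoc]
      _ = e * ((a + c) * y) * e := by rw [h]
      _ = y * e := by rw [← mul_assoc, he2, one_mul]
  -- cba = abc
  have h1 : c * b * a = a * b * c := by
    calc c * b * a = b * (c * a) := by rw [← hbc, mul_assoc]
      _ = q ^ 2 * (b * (a * c)) := by rw [hca, hmove]
      _ = q ^ 2 * (b * a) * c := by simp only [mul_assoc]
      _ = a * b * c := by rw [← hab]
  have key1 : e * (c * b) = b * c * e := conj _ _ (by
    calc c * b * (a + c) = c * b * a + c * b * c := by rw [mul_add]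
      _ = a * (b * c) + c * (b * c) := by rw [h1]; simp only [mul_assoc]
      _ = (a + c) * (b * c) := by rw [add_mul])
  have key2 : e * (a * b) = b * a * e := conj _ _ (by
    calc a * b * (a + c) = a * b * a + a * b * c := by rw [mul_add]
      _ = a * (b * a) + c * (b * a) := by rw [← h1]; simp only [mul_assoc]
      _ = (a + c) * (b * a) := by rw [add_mul])
  -- ab·bc = q² · cb·ba
  have h2 : a * b * (b * c) = q ^ 2 * (c * b * (b * a)) := by
    have hR : c * b * (b * a) = q ^ 2 * (b * (b * (a * c))) := by
      rw [← hbc, mul_assoc, ← mul_assoc c b a, ← hbc, mul_assoc b c a, hca, hmove, hmove]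
    calc a * b * (b * c) = q ^ 2 * (b * a * (b * c)) := by rw [hab]; simp only [mul_assoc]
      _ = q ^ 2 * (b * (q ^ 2 * (b * a) * c)) := by rw [← hab]; simp only [mul_assoc]
      _ = q ^ 2 * (q ^ 2 * (b * (b * (a * c)))) := by
            rw [mul_assoc (q ^ 2), hmove]; simp only [mul_assoc]
      _ = q ^ 2 * (c * b * (b * a)) := by rw [← hR]
  refine ⟨⟨by rw [mul_assoc, key1], by rw [mul_assoc, key2]⟩, ?_, ?_, ?_⟩
  · -- b'c' = q² c'b'
    show (a + c) * (b * a * e) = q ^ 2 * (b * a * e * (a + c))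
    rw [mul_assoc (b * a) e (a + c), he2, mul_one, ← key2, ← mul_assoc, he1, one_mul, hab]
  · -- c'a' = q² a'c'
    show b * a * e * (b * c * e) = q ^ 2 * (b * c * e * (b * a * e))
    calc b * a * e * (b * c * e) = e * (a * b * (b * c)) * e := by
          rw [← key2]; simp only [mul_assoc]
      _ = e * (q ^ 2 * (c * b * (b * a))) * e := by rw [h2]
      _ = q ^ 2 * (e * (c * b) * (b * a * e)) := by rw [hmove]; simp only [mul_assoc]
      _ = q ^ 2 * (b * c * e * (b * a * e)) := by rw [key1]
  · -- a'b' = b'a'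
    show b * c * e * (a + c) = (a + c) * (b * c * e)
    rw [mul_assoc (b * c) e (a + c), he2, mul_one, ← key1, ← mul_assoc, he1, one_mul, hbc]
end

section
/- Let R be an associative unital ring, q a central invertible element, and a, b, c invertible elements of R with a + c invertible, satisfying ab = q²ba, ca = q²ac, and bc = cb. Define a' := bc(a+c)⁻¹, b' := a+c, c' := ba(a+c)⁻¹, and then a'' := b'c'(a'+c')⁻¹, b'' := a'+c', c'' := b'a'(a'+c')⁻¹. Then a' + c' = b (in particular it is invertible), and the map φ : (a,b,c) ↦ (a',b',c') is an involution: a'' = a, b'' = b, c'' = c. -/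
/-- Involutivity of the quantum Lusztig transformation `φ : (a,b,c) ↦ (a',b',c')`
(Section 5 of the paper): `a' + c' = b` (in particular it is invertible), and
applying the transformation twice returns `(a,b,c)`. -/
theorem quantum_lusztig_transformation_involution (R : Type*) [Ring R] (q a b c : R)
    (hqc : ∀ x : R, q * x = x * q) (hq : IsUnit q)
    (ha : IsUnit a) (hb : IsUnit b) (hc : IsUnit c) (hac : IsUnit (a + c))
    (hab : a * b = q ^ 2 * (b * a)) (hca : c * a = q ^ 2 * (a * c))
    (hbc : b * c = c * b) :
    let a' := b * c * Ring.inverse (a + c)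
    let b' := a + c
    let c' := b * a * Ring.inverse (a + c)
    let a'' := b' * c' * Ring.inverse (a' + c')
    let b'' := a' + c'
    let c'' := b' * a' * Ring.inverse (a' + c')
    a' + c' = b ∧ IsUnit (a' + c') ∧ a'' = a ∧ b'' = b ∧ c'' = c := by
  intro a' b' c' a'' b'' c''
  set i := Ring.inverse (a + c) with hi
  have hii : (a + c) * i = 1 := Ring.mul_inverse_cancel _ hac
  have h2 : ∀ x : R, q ^ 2 * x = x * q ^ 2 := by
    intro x
    rw [pow_two, mul_assoc, hqc, ← mul_assoc, hqc x, mul_assoc]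
  have habc : a * b * c = c * b * a := by
    rw [hab, mul_assoc, mul_assoc b a c, ← mul_assoc (q ^ 2) b, h2,
      mul_assoc b (q ^ 2), ← hca, ← mul_assoc, hbc]
  have h1 : a' + c' = b := by
    show b * c * i + b * a * i = b
    rw [mul_assoc, mul_assoc, ← mul_add, ← add_mul, add_comm c a, hii, mul_one]
  have hinv : Ring.inverse (a' + c') = Ring.inverse b := by rw [h1]
  have hbb : b * Ring.inverse b = 1 := Ring.mul_inverse_cancel _ hb
  have key1 : (a + c) * (b * a) = a * b * (a + c) := by
    rw [add_mul, mul_add, ← mul_assoc, ← mul_assoc, ← habc]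
  have key2 : (a + c) * (b * c) = c * b * (a + c) := by
    rw [add_mul, mul_add, ← mul_assoc, ← mul_assoc, habc]
  have h3 : a'' = a := by
    show (a + c) * (b * a * i) * Ring.inverse (a' + c') = a
    rw [hinv, ← mul_assoc, key1, mul_assoc (a * b), hii, mul_one, mul_assoc, hbb, mul_one]
  have h5 : c'' = c := by
    show (a + c) * (b * c * i) * Ring.inverse (a' + c') = c
    rw [hinv, ← mul_assoc, key2, mul_assoc (c * b), hii, mul_one, mul_assoc, hbb, mul_one]
  exact ⟨h1, h1 ▸ hb, h3, h1, h5⟩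
end

section
/- Let R be an associative unital ring, q a central invertible element, and a, b, c invertible elements of R with a + c invertible, satisfying ab = q²ba, ca = q²ac, and bc = cb. Define a' := bc(a+c)⁻¹, b' := a+c, c' := ba(a+c)⁻¹. Then in the ring of 3×3 matrices over R the quantum Gauss decomposition identity holds: (1 + a·E₂₃)·(1 + b·E₁₂)·(1 + c·E₂₃) = (1 + a'·E₁₂)·(1 + b'·E₂₃)·(1 + c'·E₁₂), where E_{k,l} denotes the 3×3 matrix over R with entry 1 at position (k,l) and 0 elsewhere. -/
/-!
Since `E_{jk} E_{ij} = 0` and `E_{ij} E_{jk} = E_{ik}`, each side of the identity expands to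
`1 + β E₁₂ + γ E₂₃ + δ E₁₃`: with `(β, γ, δ) = (b, a + c, b c)` on the left and
`(a' + c', b', a' b')` on the right. Thus the identity amounts to
`a' + c' = b (c + a) (a + c)⁻¹ = b` and `a' b' = b c (a + c)⁻¹ (a + c) = b c`.
-/

open Matrix

section

variable {n R : Type*} [Fintype n] [DecidableEq n] [Ring R] {i j k : n}

theorem one_add_single_triple_mul_jk_ij_jk
    (hik : i ≠ k) (hjk : j ≠ k) (a b c : R) :
    (1 + single j k a) * (1 + single i j b) * (1 + single j k c) =
      1 + single i j b + single j k (a + c) + single i k (b * c) := by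
  simp only [mul_add, mul_one, add_mul, one_mul, ne_eq, hik.symm, not_false_eq_true,
    single_mul_single_of_ne, add_zero, hjk.symm, single_mul_single_same, single_add]
  abel

theorem one_add_single_triple_mul_ij_jk_ij
    (hij : i ≠ j) (hik : i ≠ k) (a b c : R) :
    (1 + single i j a) * (1 + single j k b) * (1 + single i j c) =
      1 + single i j (a + c) + single j k b + single i k (a * b) := by
  simp only [mul_add, mul_one, add_mul, one_mul, single_mul_single_same, ne_eq, hij.symm,
    not_false_eq_true, single_mul_single_of_ne, add_zero, hik.symm, single_add]
  abel

end

theorem quantum_gauss_decomposition_general (R : Type*) [Ring R] (a b c : R) (hac : IsUnit (a + c)) :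
    ((1 : Matrix (Fin 3) (Fin 3) R) + Matrix.single 1 2 a) *
        (1 + Matrix.single 0 1 b) * (1 + Matrix.single 1 2 c) =
      (1 + Matrix.single 0 1 (b * c * Ring.inverse (a + c))) *
        (1 + Matrix.single 1 2 (a + c)) *
          (1 + Matrix.single 0 1 (b * a * Ring.inverse (a + c))) := by
  have hsum : b * c * Ring.inverse (a + c) + b * a * Ring.inverse (a + c) = b := by
    rw [← add_mul, ← mul_add, add_comm c a, mul_assoc, Ring.mul_inverse_cancel _ hac, mul_one]
  have hprod : b * c * Ring.inverse (a + c) * (a + c) = b * c := by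
    rw [mul_assoc, Ring.inverse_mul_cancel _ hac, mul_one]
  rw [one_add_single_triple_mul_jk_ij_jk (by decide) (by decide),
    one_add_single_triple_mul_ij_jk_ij (by decide) (by decide), hsum, hprod]

/-- The quantum Gauss decomposition identity (Section 5 of the paper):
`x₂(a)x₁(b)x₂(c) = x₁(a')x₂(b')x₁(c')` in 3×3 matrices over a ring with
q-commuting entries, where `x_i(u) = 1 + u·E_{i,i+1}`,
`a' = bc(a+c)⁻¹`, `b' = a+c`, `c' = ba(a+c)⁻¹`. -/
theorem quantum_gauss_decomposition (R : Type*) [Ring R] (q a b c : R)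
    (hqc : ∀ x : R, q * x = x * q) (hq : IsUnit q)
    (ha : IsUnit a) (hb : IsUnit b) (hc : IsUnit c) (hac : IsUnit (a + c))
    (hab : a * b = q ^ 2 * (b * a)) (hca : c * a = q ^ 2 * (a * c))
    (hbc : b * c = c * b) :
    ((1 : Matrix (Fin 3) (Fin 3) R) + Matrix.single 1 2 a) *
        (1 + Matrix.single 0 1 b) * (1 + Matrix.single 1 2 c) =
      (1 + Matrix.single 0 1 (b * c * Ring.inverse (a + c))) *
        (1 + Matrix.single 1 2 (a + c)) *
          (1 + Matrix.single 0 1 (b * a * Ring.inverse (a + c))) :=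
  quantum_gauss_decomposition_general R a b c hac
end

section
/- Let A be an associative unital algebra over ℂ, q ∈ ℂ nonzero, I a finite index set, and (a_{ij}) a simply-laced Cartan matrix on I (a_{ii} = 2, a_{ij} = a_{ji} ∈ {0, −1} for i ≠ j). Suppose E_i, F_i ∈ A and invertible K_i ∈ A satisfy K_iK_j = K_jK_i, K_iE_j = q^{a_{ij}}E_jK_i, and K_iF_j = q^{−a_{ij}}F_jK_i for all i, j ∈ I. Let n : I → {0,1} satisfy n_i + n_j = 1 whenever a_{ij} = −1, and set 𝔮_i := q² if n_i = 1 and q^{−2} if n_i = 0, 𝐄_i := q^{n_i}E_iK_i^{n_i}, 𝐅_i := q^{1−n_i}F_iK_i^{n_i−1}, 𝐊_i := K_i² if n_i = 1 and K_i^{−2} if n_i = 0. Then for all i, j ∈ I: 𝐊_i𝐄_j = 𝔮_i^{a_{ij}}𝐄_j𝐊_i and 𝐊_i𝐅_j = 𝔮_i^{−a_{ij}}𝐅_j𝐊_i. -/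
/-!
Conjugation by `K_i` rescales `E_j` by `q^{a_ij}` and `F_j` by `q^{-a_ij}`, so conjugation by
`K_i^m` rescales them by the `m`-th powers of these scalars. The modified generators differ from
`E_j`, `F_j` only by scalars and by powers of `K_j`, which commute with `K_i`; with `m = ±2` this
gives the relations with `𝔮_i = q^{±2}`.
-/

def QCommute {R A : Type*} [CommSemiring R] [Semiring A] [Module R A] (c : R) (u x : A) : Prop :=
  u * x = c • (x * u)

namespace QCommute

section Semiring

variable {R A : Type*} [CommSemiring R] [Semiring A] [Algebra R A] {c : R} {u x : A}

theorem smul_right (h : QCommute c u x) (d : R) : QCommute c u (d • x) := by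
  rw [QCommute, mul_smul_comm, h, smul_mul_assoc, smul_comm]

theorem mul_right_of_commute {v : A} (h : QCommute c u x) (hv : Commute u v) :
    QCommute c u (x * v) := by
  rw [QCommute, ← mul_assoc, h, smul_mul_assoc, mul_assoc, hv.eq, ← mul_assoc]

theorem pow_left (h : QCommute c u x) : ∀ k : ℕ, QCommute (c ^ k) (u ^ k) x
  | 0 => by simp [QCommute]
  | k + 1 => by
    rw [QCommute, pow_succ, mul_assoc, h, mul_smul_comm, ← mul_assoc, pow_left h k,
      smul_mul_assoc, smul_smul, pow_succ', mul_assoc]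

end Semiring

variable {𝕜 A : Type*} [Field 𝕜] [Ring A] [Algebra 𝕜 A] {c : 𝕜} {u : Aˣ} {x : A}

theorem units_inv_left (h : QCommute c (u : A) x) (hc : c ≠ 0) :
    QCommute c⁻¹ ((u⁻¹ : Aˣ) : A) x := by
  have hxu : x * ↑u⁻¹ = c • (↑u⁻¹ * x) := by
    calc x * ↑u⁻¹ = ↑u⁻¹ * ((u : A) * x) * ↑u⁻¹ := by rw [← mul_assoc, u.inv_mul, one_mul]
      _ = c • (↑u⁻¹ * x) := by
        rw [h, mul_smul_comm, smul_mul_assoc, mul_assoc, mul_assoc, u.mul_inv, mul_one]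
  rw [QCommute, hxu, smul_smul, inv_mul_cancel₀ hc, one_smul]

theorem units_zpow_left (h : QCommute c (u : A) x) (hc : c ≠ 0) (m : ℤ) :
    QCommute (c ^ m) ((u ^ m : Aˣ) : A) x := by
  cases m with
  | ofNat k => simpa using h.pow_left k
  | negSucc k =>
    rw [zpow_negSucc, zpow_negSucc, ← inv_pow, ← inv_pow, Units.val_pow_eq_pow_val]
    exact (h.units_inv_left hc).pow_left (k + 1)

end QCommute

theorem modified_quantum_group_K_relations_general
    (A : Type*) [Ring A] [Algebra ℂ A] (q : ℂ) (hq : q ≠ 0)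
    (I : Type*) (a : I → I → ℤ)
    (E F : I → A) (K : I → Aˣ)
    (hKK : ∀ i j, K i * K j = K j * K i)
    (hKE : ∀ i j, (K i : A) * E j = q ^ (a i j) • (E j * (K i : A)))
    (hKF : ∀ i j, (K i : A) * F j = q ^ (-(a i j)) • (F j * (K i : A)))
    (n : I → ℕ) :
    ∀ i j : I,
      (let 𝔮 : I → ℂ := fun k => if n k = 1 then q ^ (2 : ℤ) else q ^ (-2 : ℤ)
       let bE : I → A := fun k => q ^ (n k) • (E k * (K k : A) ^ (n k))
       let bF : I → A := fun k =>
         q ^ (1 - n k) • (F k * ((K k ^ ((n k : ℤ) - 1) : Aˣ) : A))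
       let bK : I → A := fun k =>
         ((K k ^ (if n k = 1 then (2 : ℤ) else -2) : Aˣ) : A)
       bK i * bE j = 𝔮 i ^ (a i j) • (bE j * bK i) ∧
         bK i * bF j = 𝔮 i ^ (-(a i j)) • (bF j * bK i)) := by
  intro i j
  dsimp only
  set m : ℤ := if n i = 1 then 2 else -2
  have h𝔮 : (if n i = 1 then q ^ (2 : ℤ) else q ^ (-2 : ℤ)) = q ^ m :=
    (apply_ite (q ^ · : ℤ → ℂ) _ _ _).symm
  have hcomm : Commute (K i ^ m) (K j) := Commute.zpow_left (hKK i j) m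
  have hE := QCommute.units_zpow_left (hKE i j) (zpow_ne_zero _ hq) m
  have hF := QCommute.units_zpow_left (hKF i j) (zpow_ne_zero _ hq) m
  rw [← zpow_mul] at hE hF
  rw [h𝔮, ← zpow_mul, ← zpow_mul, mul_comm m, mul_comm m]
  exact ⟨(hE.mul_right_of_commute (hcomm.units_val.pow_right _)).smul_right _,
    (hF.mul_right_of_commute (hcomm.zpow_right _).units_val).smul_right _⟩

/-- Relations (10.3) and (10.4) of the paper for the modified quantum group
`𝐔_𝔮(g_ℝ)`: given generators `E_i, F_i` and invertible `K_i` (encoded as units)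
of an algebra over `ℂ` satisfying the standard quantum group `K`-relations for a
simply-laced Cartan matrix `(a_{ij})`, and an alternating weight assignment
`n : I → {0,1}`, the modified generators
`𝐄_i = q^{n_i}E_iK_i^{n_i}`, `𝐅_i = q^{1−n_i}F_iK_i^{n_i−1}`,
`𝐊_i = K_i^{±2}` satisfy `𝐊_i𝐄_j = 𝔮_i^{a_{ij}}𝐄_j𝐊_i` and
`𝐊_i𝐅_j = 𝔮_i^{−a_{ij}}𝐅_j𝐊_i`, where `𝔮_i = q^{±2}` according to `n_i`. -/
theorem modified_quantum_group_K_relations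
    (A : Type*) [Ring A] [Algebra ℂ A] (q : ℂ) (hq : q ≠ 0)
    (I : Type*) [Fintype I] (a : I → I → ℤ)
    (hdiag : ∀ i, a i i = 2)
    (hsymm : ∀ i j, i ≠ j → a i j = a j i)
    (hoff : ∀ i j, i ≠ j → a i j = 0 ∨ a i j = -1)
    (E F : I → A) (K : I → Aˣ)
    (hKK : ∀ i j, K i * K j = K j * K i)
    (hKE : ∀ i j, (K i : A) * E j = q ^ (a i j) • (E j * (K i : A)))
    (hKF : ∀ i j, (K i : A) * F j = q ^ (-(a i j)) • (F j * (K i : A)))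
    (n : I → ℕ) (hn : ∀ i, n i = 0 ∨ n i = 1)
    (halt : ∀ i j, a i j = -1 → n i + n j = 1) :
    ∀ i j : I,
      (let 𝔮 : I → ℂ := fun k => if n k = 1 then q ^ (2 : ℤ) else q ^ (-2 : ℤ)
       let bE : I → A := fun k => q ^ (n k) • (E k * (K k : A) ^ (n k))
       let bF : I → A := fun k =>
         q ^ (1 - n k) • (F k * ((K k ^ ((n k : ℤ) - 1) : Aˣ) : A))
       let bK : I → A := fun k =>
         ((K k ^ (if n k = 1 then (2 : ℤ) else -2) : Aˣ) : A)
       bK i * bE j = 𝔮 i ^ (a i j) • (bE j * bK i) ∧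
         bK i * bF j = 𝔮 i ^ (-(a i j)) • (bF j * bK i)) :=
  modified_quantum_group_K_relations_general A q hq I a E F K hKK hKE hKF n
end

section
/- Let A be an associative unital algebra over ℂ and q ∈ ℂ nonzero with q⁴ ≠ 1. Suppose E, F ∈ A and invertible K ∈ A satisfy KE = q²EK, KF = q^{−2}FK, and EF − FE = (K − K⁻¹)/(q − q⁻¹). Let n ∈ {0,1}, and set 𝔮' := q² if n = 1 and q^{−2} if n = 0, 𝐄 := qⁿ E Kⁿ, 𝐅 := q^{1−n} F K^{n−1}, 𝐊 := K² if n = 1 and K^{−2} if n = 0. Then the modified q-commutator relation holds: 𝐄𝐅 − (𝔮')⁻¹𝐅𝐄 = (1 − 𝐊)/(1 − 𝔮'). -/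
/-! Moving `K^{∓1}` past one generator with the rank-one relations `KE = q²EK`, `KF = q⁻²FK`
turns `𝐄𝐅 − 𝔮'⁻¹𝐅𝐄` into `q^{±1} (EF − FE) K^{∓1}`; substituting
`EF − FE = (K − K⁻¹)/(q − q⁻¹)` leaves an identity between scalars. -/

section QCommutator

variable {𝕜 A : Type*} [Field 𝕜] [Ring A] [Algebra 𝕜 A]

/-- The paper's `[a, b]_𝔮`. -/
def qCommutator (𝔮 : 𝕜) (a b : A) : A := a * b - 𝔮⁻¹ • (b * a)

theorem qCommutator_smul_left (𝔮 s : 𝕜) (a b : A) :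
    qCommutator 𝔮 (s • a) b = s • qCommutator 𝔮 a b := by
  simp only [qCommutator, smul_mul_assoc, mul_smul_comm, smul_sub, smul_comm 𝔮⁻¹]

theorem qCommutator_smul_right (𝔮 t : 𝕜) (a b : A) :
    qCommutator 𝔮 a (t • b) = t • qCommutator 𝔮 a b := by
  simp only [qCommutator, smul_mul_assoc, mul_smul_comm, smul_sub, smul_comm 𝔮⁻¹]

theorem qCommutator_mul_right_of_mul_eq_smul {𝔮 : 𝕜} {a l : A} (b : A)
    (h : a * l = 𝔮⁻¹ • (l * a)) :
    qCommutator 𝔮 a (b * l) = (a * b - b * a) * l := by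
  rw [qCommutator, mul_assoc b, ← mul_smul_comm, ← h]
  simp only [sub_mul, mul_assoc]

theorem qCommutator_mul_left_of_mul_eq_smul {𝔮 : 𝕜} {l b : A} (a : A)
    (h : l * b = 𝔮⁻¹ • (b * l)) :
    qCommutator 𝔮 (a * l) b = 𝔮⁻¹ • ((a * b - b * a) * l) := by
  rw [qCommutator, mul_assoc, h, mul_smul_comm, sub_mul, smul_sub, mul_assoc, mul_assoc]

end QCommutator

theorem Units.mul_inv_eq_smul_inv_mul {R A : Type*} [CommSemiring R] [Semiring A] [Algebra R A]
    {u : Aˣ} {a : A} {c : R} (h : (u : A) * a = c • (a * u)) :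
    a * ↑u⁻¹ = c • (↑u⁻¹ * a) := by
  calc a * ↑u⁻¹ = ↑u⁻¹ * (u * a) * ↑u⁻¹ := by rw [← mul_assoc, u.inv_mul, one_mul]
    _ = c • (↑u⁻¹ * a) := by
      rw [h, mul_smul_comm, smul_mul_assoc, mul_assoc, mul_assoc, u.mul_inv, mul_one]

theorem modified_quantum_group_EF_relation_general
    (A : Type*) [Ring A] [Algebra ℂ A] (q : ℂ) (hq : q ≠ 0)
    (E F : A) (K : Aˣ)
    (hKE : (K : A) * E = q ^ 2 • (E * (K : A)))
    (hKF : (K : A) * F = q ^ (-2 : ℤ) • (F * (K : A)))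
    (hEF : E * F - F * E = (q - q⁻¹)⁻¹ • ((K : A) - ((K⁻¹ : Aˣ) : A)))
    (n : ℕ) (hn : n = 0 ∨ n = 1) :
    let 𝔮' : ℂ := if n = 1 then q ^ (2 : ℤ) else q ^ (-2 : ℤ)
    let bE : A := q ^ n • (E * (K : A) ^ n)
    let bF : A := q ^ (1 - n) • (F * ((K ^ ((n : ℤ) - 1) : Aˣ) : A))
    let bK : A := ((K ^ (if n = 1 then (2 : ℤ) else -2) : Aˣ) : A)
    bE * bF - 𝔮'⁻¹ • (bF * bE) = (1 - 𝔮')⁻¹ • ((1 : A) - bK) := by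
  intro 𝔮' bE bF bK
  change qCommutator 𝔮' bE bF = _
  rcases hn with rfl | rfl
  · have hEK : E * ↑K⁻¹ = (q ^ (-2 : ℤ))⁻¹ • (↑K⁻¹ * E) := by
      rw [zpow_neg, inv_inv, zpow_ofNat]; exact Units.mul_inv_eq_smul_inv_mul hKE
    have hK : ((K ^ (-2 : ℤ) : Aˣ) : A) = ↑K⁻¹ * ↑K⁻¹ := by
      rw [zpow_neg, zpow_two, mul_inv_rev, Units.val_mul]
    simp only [bE, bF, bK, 𝔮', if_neg zero_ne_one, pow_zero, mul_one, one_smul, Nat.sub_zero,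
      pow_one, Nat.cast_zero, zero_sub, zpow_neg_one]
    rw [qCommutator_smul_right, qCommutator_mul_right_of_mul_eq_smul F hEK, hEF, smul_mul_assoc,
      smul_smul, sub_mul, K.mul_inv, hK]
    congr 1
    field_simp
  · have hKF' : (K : A) * F = (q ^ (2 : ℤ))⁻¹ • (F * K) := by rwa [← zpow_neg]
    have hK : ((K ^ (2 : ℤ) : Aˣ) : A) = K * K := by rw [zpow_two, Units.val_mul]
    simp only [bE, bF, bK, 𝔮', ↓reduceIte, pow_one, Nat.sub_self, pow_zero, Nat.cast_one,
      sub_self, zpow_zero, Units.val_one, mul_one, one_smul]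
    rw [qCommutator_smul_left, qCommutator_mul_left_of_mul_eq_smul E hKF', hEF, smul_mul_assoc,
      smul_smul, smul_smul, sub_mul, K.inv_mul, hK, ← neg_sub (1 : A),
      smul_neg, ← neg_smul]
    congr 1
    rw [neg_eq_iff_eq_neg, neg_inv, neg_sub]
    field_simp

/-- Relation (10.6) of the paper for the modified quantum group `𝐔_𝔮(g_ℝ)` at a
single node: from the rank-one relations `KE = q²EK`, `KF = q⁻²FK`,
`EF − FE = (K − K⁻¹)/(q − q⁻¹)` and a weight `n ∈ {0,1}`, the modified generators
`𝐄 = qⁿEKⁿ`, `𝐅 = q^{1−n}FK^{n−1}`, `𝐊 = K^{±2}` satisfy the modified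
q-commutator relation `𝐄𝐅 − (𝔮')⁻¹𝐅𝐄 = (1 − 𝐊)/(1 − 𝔮')`, where `𝔮' = q^{±2}`
according to `n`. -/
theorem modified_quantum_group_EF_relation
    (A : Type*) [Ring A] [Algebra ℂ A] (q : ℂ) (hq : q ≠ 0) (hq4 : q ^ 4 ≠ 1)
    (E F : A) (K : Aˣ)
    (hKE : (K : A) * E = q ^ 2 • (E * (K : A)))
    (hKF : (K : A) * F = q ^ (-2 : ℤ) • (F * (K : A)))
    (hEF : E * F - F * E = (q - q⁻¹)⁻¹ • ((K : A) - ((K⁻¹ : Aˣ) : A)))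
    (n : ℕ) (hn : n = 0 ∨ n = 1) :
    let 𝔮' : ℂ := if n = 1 then q ^ (2 : ℤ) else q ^ (-2 : ℤ)
    let bE : A := q ^ n • (E * (K : A) ^ n)
    let bF : A := q ^ (1 - n) • (F * ((K ^ ((n : ℤ) - 1) : Aˣ) : A))
    let bK : A := ((K ^ (if n = 1 then (2 : ℤ) else -2) : Aˣ) : A)
    bE * bF - 𝔮'⁻¹ • (bF * bE) = (1 - 𝔮')⁻¹ • ((1 : A) - bK) :=
  modified_quantum_group_EF_relation_general A q hq E F K hKE hKF hEF n hn
end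

section
/- Let A be an associative unital algebra over ℂ, q ∈ ℂ nonzero. Suppose E_i, E_j, F_i, F_j ∈ A and invertible commuting K_i, K_j ∈ A satisfy K_iE_i = q²E_iK_i, K_iE_j = q^{−1}E_jK_i, K_jE_i = q^{−1}E_iK_j, the analogous relations with each E replaced by F and q replaced by q⁻¹ (K_iF_i = q^{−2}F_iK_i, K_iF_j = qF_jK_i, K_jF_i = qF_iK_j), together with the quantum Serre relations E_i²E_j − (q + q⁻¹)E_iE_jE_i + E_jE_i² = 0 and F_i²F_j − (q + q⁻¹)F_iF_jF_i + F_jF_i² = 0. Let n_i, n_j ∈ {0,1} with n_i + n_j = 1, and set 𝔮_i := q² if n_i = 1 and q^{−2} if n_i = 0, 𝐄_k := q^{n_k}E_kK_k^{n_k} and 𝐅_k := q^{1−n_k}F_kK_k^{n_k−1} for k ∈ {i,j}. Then the modified Serre relations hold: (𝐄_j𝐄_i − 𝔮_i𝐄_i𝐄_j)𝐄_i = 𝐄_i(𝐄_j𝐄_i − 𝔮_i𝐄_i𝐄_j) and (𝐅_j𝐅_i − 𝔮_i⁻¹𝐅_i𝐅_j)𝐅_i = 𝐅_i(𝐅_j𝐅_i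 − 𝔮_i⁻¹𝐅_i𝐅_j). -/
section helpers
variable {A : Type*} [Ring A] [Algebra ℂ A]

private lemma comm_shift' (K X : A) (c : ℂ) (h : K * X = c • (X * K)) :
    ∀ z : A, K * (X * z) = c • (X * (K * z)) := fun z => by
  rw [← mul_assoc, h, smul_mul_assoc, mul_assoc]

private lemma inv_comm' (K : Aˣ) (X : A) (c : ℂ) (hc : c ≠ 0)
    (h : (K : A) * X = c • (X * (K : A))) :
    ((K⁻¹ : Aˣ) : A) * X = c⁻¹ • (X * ((K⁻¹ : Aˣ) : A)) := by
  have h2 : X * (K : A) = c⁻¹ • ((K : A) * X) := by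
    rw [h, smul_smul, inv_mul_cancel₀ hc, one_smul]
  calc ((K⁻¹ : Aˣ) : A) * X
      = ((K⁻¹ : Aˣ) : A) * (X * (K : A)) * ((K⁻¹ : Aˣ) : A) := by
        simp [mul_assoc, Units.mul_inv_cancel_right]
    _ = c⁻¹ • (X * ((K⁻¹ : Aˣ) : A)) := by
        rw [h2, mul_smul_comm, smul_mul_assoc]
        simp [mul_assoc, Units.inv_mul_cancel_left]

private lemma serre_shift' (q : ℂ) (X Y : A)
    (hS : X ^ 2 * Y - (q + q⁻¹) • (X * Y * X) + Y * X ^ 2 = 0) :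
    ∀ z : A, Y * (X * (X * z)) =
      (q + q⁻¹) • (X * (Y * (X * z))) - X * (X * (Y * z)) := by
  intro z
  have h := congrArg (· * z) hS
  simp only [add_mul, sub_mul, smul_mul_assoc, pow_two, mul_assoc, zero_mul] at h
  rw [eq_sub_iff_add_eq]
  linear_combination (norm := abel) h

end helpers

/-- Relation (10.7) of the paper: the quantum Serre relations
`[[𝐄_j,𝐄_i]_{𝔮_i},𝐄_i] = 0 = [[𝐅_j,𝐅_i]_{𝔮_i},𝐅_i]` of the modified quantum group
`𝐔_𝔮(g_ℝ)` for a pair of adjacent nodes `i, j` of a simply-laced Dynkin diagram,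
with alternating weights `n_i + n_j = 1`, written out as: the modified generators
satisfy `(𝐄_j𝐄_i − 𝔮_i𝐄_i𝐄_j)𝐄_i = 𝐄_i(𝐄_j𝐄_i − 𝔮_i𝐄_i𝐄_j)` and
`(𝐅_j𝐅_i − 𝔮_i⁻¹𝐅_i𝐅_j)𝐅_i = 𝐅_i(𝐅_j𝐅_i − 𝔮_i⁻¹𝐅_i𝐅_j)`. -/
theorem modified_quantum_group_Serre_relations
    (A : Type*) [Ring A] [Algebra ℂ A] (q : ℂ) (hq : q ≠ 0)
    (Ei Ej Fi Fj : A) (Ki Kj : Aˣ)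
    (hKK : Ki * Kj = Kj * Ki)
    (hKiEi : (Ki : A) * Ei = q ^ 2 • (Ei * (Ki : A)))
    (hKiEj : (Ki : A) * Ej = q⁻¹ • (Ej * (Ki : A)))
    (hKjEi : (Kj : A) * Ei = q⁻¹ • (Ei * (Kj : A)))
    (hKiFi : (Ki : A) * Fi = (q ^ 2)⁻¹ • (Fi * (Ki : A)))
    (hKiFj : (Ki : A) * Fj = q • (Fj * (Ki : A)))
    (hKjFi : (Kj : A) * Fi = q • (Fi * (Kj : A)))
    (hSerreE : Ei ^ 2 * Ej - (q + q⁻¹) • (Ei * Ej * Ei) + Ej * Ei ^ 2 = 0)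
    (hSerreF : Fi ^ 2 * Fj - (q + q⁻¹) • (Fi * Fj * Fi) + Fj * Fi ^ 2 = 0)
    (ni nj : ℕ) (hni : ni = 0 ∨ ni = 1) (hnj : nj = 0 ∨ nj = 1)
    (halt : ni + nj = 1) :
    let 𝔮i : ℂ := if ni = 1 then q ^ (2 : ℤ) else q ^ (-2 : ℤ)
    let bEi : A := q ^ ni • (Ei * (Ki : A) ^ ni)
    let bEj : A := q ^ nj • (Ej * (Kj : A) ^ nj)
    let bFi : A := q ^ (1 - ni) • (Fi * ((Ki ^ ((ni : ℤ) - 1) : Aˣ) : A))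
    let bFj : A := q ^ (1 - nj) • (Fj * ((Kj ^ ((nj : ℤ) - 1) : Aˣ) : A))
    (bEj * bEi - 𝔮i • (bEi * bEj)) * bEi = bEi * (bEj * bEi - 𝔮i • (bEi * bEj)) ∧
      (bFj * bFi - 𝔮i⁻¹ • (bFi * bFj)) * bFi =
        bFi * (bFj * bFi - 𝔮i⁻¹ • (bFi * bFj)) := by
  have h2q : (q ^ 2 : ℂ) ≠ 0 := pow_ne_zero _ hq
  have sE := serre_shift' q Ei Ej hSerreE
  have sF := serre_shift' q Fi Fj hSerreF
  rcases hni with h | h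
  · -- ni = 0, nj = 1
    subst h
    have hj : nj = 1 := by omega
    subst hj
    have cE := comm_shift' ((Kj : A)) Ei q⁻¹ hKjEi
    have iFi := inv_comm' Ki Fi ((q ^ 2)⁻¹) (inv_ne_zero h2q) hKiFi
    have iFj := inv_comm' Ki Fj q hq hKiFj
    rw [inv_inv] at iFi
    have cFi := comm_shift' _ Fi _ iFi
    have cFj := comm_shift' _ Fj _ iFj
    simp only [Nat.cast_zero, Nat.cast_one, pow_zero, pow_one, one_smul, mul_one,
      zero_sub, sub_self, zpow_zero, zpow_neg, zpow_one, Units.val_one,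
      Nat.sub_zero, Nat.sub_self, show ((0:ℕ)=1) = False from by decide, if_false,
      show (q:ℂ) ^ (2:ℤ) = q ^ (2:ℕ) from by norm_cast]
    constructor
    · simp only [smul_mul_assoc, mul_smul_comm, sub_mul, mul_sub, smul_sub,
        smul_smul, mul_assoc, cE, hKjEi, sE]
      match_scalars <;> first
        | ring1
        | (field_simp [inv_inv]; try ring1)
    · simp only [smul_mul_assoc, mul_smul_comm, sub_mul, mul_sub, smul_sub,
        smul_smul, mul_assoc, cFi, cFj, iFi, iFj, sF]
      match_scalars <;> first
        | ring1
        | (field_simp [inv_inv]; try ring1)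
  · -- ni = 1, nj = 0
    subst h
    have hj : nj = 0 := by omega
    subst hj
    have cEi := comm_shift' ((Ki : A)) Ei (q ^ 2) hKiEi
    have cEj := comm_shift' ((Ki : A)) Ej q⁻¹ hKiEj
    have iFi := inv_comm' Kj Fi q hq hKjFi
    have cFi := comm_shift' _ Fi _ iFi
    simp only [Nat.cast_zero, Nat.cast_one, pow_zero, pow_one, one_smul, mul_one,
      zero_sub, sub_self, zpow_zero, zpow_neg, zpow_one, Units.val_one,
      Nat.sub_zero, Nat.sub_self, show ((1:ℕ)=1) = True from by decide, if_true,
      show (q:ℂ) ^ (2:ℤ) = q ^ (2:ℕ) from by norm_cast]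
    constructor
    · simp only [smul_mul_assoc, mul_smul_comm, sub_mul, mul_sub, smul_sub,
        smul_smul, mul_assoc, cEi, cEj, hKiEi, hKiEj, sE]
      match_scalars <;> first
        | ring1
        | (field_simp [inv_inv]; try ring1)
    · simp only [smul_mul_assoc, mul_smul_comm, sub_mul, mul_sub, smul_sub,
        smul_smul, mul_assoc, cFi, iFi, sF]
      match_scalars <;> first
        | ring1
        | (field_simp [inv_inv]; try ring1)
end
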